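/- arXiv:1506.01071 — 4 statements merged into one kernel-verified Lean document; each statement's English description precedes it below -/
import Mathlib

section
/- Let G be a finite set, let F be a family of subsets of G closed under pairwise intersection (the extents of a pattern structure), and let F' ⊆ F be a subfamily (the extents of a projected pattern structure). Let ψC : Set(G) → Set(G) be monotone (X ⊆ Y ⇒ ψC(X) ⊆ ψC(Y)) and extensive (X ⊆ ψC(X)) and suppose every member of F' is a fixed point of ψC. Let E ∈ F' and let E_p ∈ F be a preimage of E, i.e., ψC(E_p) = E. Then for every E_c ∈ F' with E_c ⊊ E there exists B ∈ F with B ⊊ E_p and |E_p \ B| ≤ |E \ E_c|. Consequently, if some E_c ∈ F' satisfies E_c ⊊ E, then Δ_F(E_p) ≤ Δ_{F'}(E), where Δ_H(A) := min{|A \ B| : B ∈ H, B ⊊ A}. (This is the projection-antimonotonicity of the Δ-measure: Δ is anti-monotonic w.r.t. any projection.) -/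
/-- The Δ-measure of a set `A` w.r.t. a family `H` of subsets:
`Δ_H(A) = min {|A \ B| : B ∈ H, B ⊊ A}`. -/
noncomputable def deltaMeasure {G : Type*} (H : Set (Set G)) (A : Set G) : ℕ :=
  sInf {n : ℕ | ∃ B ∈ H, B ⊂ A ∧ n = (A \ B).ncard}

/-- Projection-antimonotonicity of the Δ-measure. Let `G` be finite, `F` a
family of subsets of `G` closed under pairwise intersection (the extents) and
`F' ⊆ F` (the extents of the projected structure). Let `ψC` be monotone and
extensive with every member of `F'` a fixed point, `E ∈ F'`, and `E_p ∈ F` a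
preimage of `E` (`ψC E_p = E`). Then for every `E_c ∈ F'` with `E_c ⊊ E` there
is `B ∈ F` with `B ⊊ E_p` and `|E_p \ B| ≤ |E \ E_c|`; consequently, if some
`E_c ∈ F'` satisfies `E_c ⊊ E`, then `Δ_F(E_p) ≤ Δ_{F'}(E)`. -/
theorem delta_projection_antimonotone {G : Type*} [Fintype G]
    (F F' : Set (Set G))
    (hFcap : ∀ X ∈ F, ∀ Y ∈ F, X ∩ Y ∈ F)
    (hF' : F' ⊆ F)
    (ψC : Set G → Set G)
    (hmono : ∀ X Y : Set G, X ⊆ Y → ψC X ⊆ ψC Y)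
    (hext : ∀ X : Set G, X ⊆ ψC X)
    (hfix : ∀ X ∈ F', ψC X = X)
    (E : Set G) (hE : E ∈ F')
    (Ep : Set G) (hEp : Ep ∈ F) (hpre : ψC Ep = E) :
    (∀ Ec ∈ F', Ec ⊂ E →
      ∃ B ∈ F, B ⊂ Ep ∧ (Ep \ B).ncard ≤ (E \ Ec).ncard) ∧
    ((∃ Ec ∈ F', Ec ⊂ E) → deltaMeasure F Ep ≤ deltaMeasure F' E) := by
  have hEpE : Ep ⊆ E := hpre ▸ hext Ep
  have key : ∀ Ec ∈ F', Ec ⊂ E →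
      ∃ B ∈ F, B ⊂ Ep ∧ (Ep \ B).ncard ≤ (E \ Ec).ncard := by
    intro Ec hEc hEcE
    refine ⟨Ep ∩ Ec, hFcap Ep hEp Ec (hF' hEc), ?_, ?_⟩
    · refine ⟨Set.inter_subset_left, fun hsub => ?_⟩
      have hEpEc : Ep ⊆ Ec := fun x hx => (hsub hx).2
      have : E ⊆ Ec := by
        have := hmono _ _ hEpEc
        rw [hpre, hfix Ec hEc] at this
        exact this
      exact hEcE.2 this
    · apply Set.ncard_le_ncard _ (Set.toFinite _)
      intro x hx
      exact ⟨hEpE hx.1, fun h => hx.2 ⟨hx.1, h⟩⟩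
  refine ⟨key, ?_⟩
  rintro ⟨Ec, hEc, hEcE⟩
  have hne : {n : ℕ | ∃ B ∈ F', B ⊂ E ∧ n = (E \ B).ncard}.Nonempty :=
    ⟨(E \ Ec).ncard, Ec, hEc, hEcE, rfl⟩
  obtain ⟨B, hB, hBE, hBeq⟩ := Nat.sInf_mem hne
  obtain ⟨C, hC, hCEp, hCcard⟩ := key B hB hBE
  calc deltaMeasure F Ep ≤ (Ep \ C).ncard := Nat.sInf_le ⟨C, hC, hCEp, rfl⟩
    _ ≤ (E \ B).ncard := hCcard
    _ = deltaMeasure F' E := hBeq.symm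
end

section
/- Let G be a finite set and cl : Set(G) → Set(G) a closure operator (extensive, monotone, idempotent). Let A ⊆ G be closed (cl(A) = A) and suppose there exists a closed set B with B ⊊ A. Define Δ(A) = min{|A \ B| : B ⊊ A, cl(B) = B} and Stab(A) = |{s ⊆ A : cl(s) = A}| / 2^{|A|}. Then Stab(A) ≤ 1 − 2^{−Δ(A)}. -/
lemma ncard_powerset_aux {G : Type*} [Fintype G] (S : Set G) :
    {s : Set G | s ⊆ S}.ncard = 2 ^ S.ncard := by
  classical
  haveI : Fintype ↥S := S.toFinite.fintype
  rw [← Nat.card_coe_set_eq, ← Nat.card_coe_set_eq]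
  rw [show {s : Set G | s ⊆ S} = 𝒫 S from rfl]
  rw [Nat.card_congr (Equiv.Set.powerset S), Nat.card_eq_fintype_card,
    Nat.card_eq_fintype_card, Fintype.card_set]

/-- Let `G` be a finite set and `cl` a closure operator on subsets of `G`
(extensive, monotone, idempotent). Let `A` be closed with some closed `B ⊊ A`,
let `Δ(A) = min {|A \ B| : B ⊊ A, cl B = B}`, and let
`Stab(A) = |{s ⊆ A : cl s = A}| / 2^{|A|}`. Then `Stab(A) ≤ 1 - 2^{-Δ(A)}`. -/
theorem stability_le_delta_bound {G : Type*} [Fintype G] (cl : Set G → Set G)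
    (hext : ∀ X : Set G, X ⊆ cl X)
    (hmono : ∀ X Y : Set G, X ⊆ Y → cl X ⊆ cl Y)
    (hidem : ∀ X : Set G, cl (cl X) = cl X)
    (A : Set G) (hA : cl A = A)
    (hex : ∃ B : Set G, cl B = B ∧ B ⊂ A) :
    ({s : Set G | s ⊆ A ∧ cl s = A}.ncard : ℝ) / 2 ^ A.ncard ≤
      1 - (2 : ℝ) ^
        (-((sInf {n : ℕ | ∃ B : Set G, B ⊂ A ∧ cl B = B ∧ n = (A \ B).ncard} : ℕ) : ℤ)) := by
  classical
  set N := sInf {n : ℕ | ∃ B : Set G, B ⊂ A ∧ cl B = B ∧ n = (A \ B).ncard} with hNdef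
  have hne : {n : ℕ | ∃ B : Set G, B ⊂ A ∧ cl B = B ∧ n = (A \ B).ncard}.Nonempty := by
    obtain ⟨B, hBcl, hBA⟩ := hex
    exact ⟨(A \ B).ncard, B, hBA, hBcl, rfl⟩
  obtain ⟨B, hBA, hBcl, hNB⟩ := Nat.sInf_mem hne
  have hBsub : B ⊆ A := hBA.subset
  have hcard : N + B.ncard = A.ncard := by
    rw [hNdef, hNB]
    exact Set.ncard_diff_add_ncard_of_subset hBsub (Set.toFinite A)
  have hdisj : Disjoint {s : Set G | s ⊆ A ∧ cl s = A} {s : Set G | s ⊆ B} := by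
    rw [Set.disjoint_left]
    rintro s ⟨hsA, hscl⟩ hsB
    have h1 : cl s ⊆ B := hBcl ▸ hmono s B hsB
    exact hBA.2 (hscl ▸ h1)
  have hkey : {s : Set G | s ⊆ A ∧ cl s = A}.ncard + 2 ^ B.ncard ≤ 2 ^ A.ncard := by
    rw [← ncard_powerset_aux B, ← ncard_powerset_aux A,
      ← Set.ncard_union_eq hdisj (Set.toFinite _) (Set.toFinite _)]
    apply Set.ncard_le_ncard _ (Set.toFinite _)
    rintro s (⟨h, -⟩ | h)
    · exact h
    · exact h.trans hBsub
  rw [div_le_iff₀ (by positivity)]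
  have hexp : (2:ℝ) ^ (-(N:ℤ)) * 2 ^ A.ncard = 2 ^ B.ncard := by
    have h : (-(N:ℤ)) + (A.ncard : ℤ) = (B.ncard : ℤ) := by omega
    calc (2:ℝ) ^ (-(N:ℤ)) * 2 ^ A.ncard = (2:ℝ) ^ ((-(N:ℤ)) + (A.ncard : ℤ)) := by
          rw [zpow_add₀ (two_ne_zero), zpow_natCast]
      _ = (2:ℝ) ^ B.ncard := by rw [h, zpow_natCast]
  rw [sub_mul, one_mul, hexp]
  have hkey' : ({s : Set G | s ⊆ A ∧ cl s = A}.ncard : ℝ) + 2 ^ B.ncard ≤ 2 ^ A.ncard := by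
    exact_mod_cast hkey
  linarith
end

section
/- Let (D,⊑) be a poset, θ ∈ ℝ, and let ψ₀, ψ₁, …, ψ_k : D → D be projections (monotone, contractive, idempotent) forming a chain: ψ_k is the identity and for each 1 ≤ i ≤ k the fixed set of ψ_{i−1} is contained in the fixed set of ψ_i. Let M₀, …, M_k : D → ℝ be measures such that for each 1 ≤ i ≤ k and each q in the fixed set of ψ_i, M_{i−1}(ψ_{i−1}(q)) ≥ M_i(q) (anti-monotonicity w.r.t. the chain of projections). Define P₀ = {p ∈ Fix(ψ₀) : M₀(p) ≥ θ} and, for 1 ≤ i ≤ k, P_i = {q ∈ Fix(ψ_i) : ψ_{i−1}(q) ∈ P_{i−1} and M_i(q) ≥ θ}. Then P_k = {p ∈ D : M_k(p) ≥ θ}; i.e., the θ-Sofia filtering scheme is sound and complete. -/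
/-- Soundness and completeness of the θ-Sofia filtering scheme. Let
`ψ 0, …, ψ k` be projections on a poset `D` forming a chain (`ψ k` is the
identity and the fixed set of `ψ i` is contained in that of `ψ (i+1)`), and let
`M 0, …, M k` be measures anti-monotonic w.r.t. the chain: for `i < k` and `q`
fixed by `ψ (i+1)`, `M i (ψ i q) ≥ M (i+1) q`. Define
`P 0 = {p ∈ Fix (ψ 0) | M 0 p ≥ θ}` and
`P (i+1) = {q ∈ Fix (ψ (i+1)) | ψ i q ∈ P i ∧ M (i+1) q ≥ θ}` for `i < k`.
Then `P k = {p | M k p ≥ θ}`. -/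
theorem theta_sofia_sound_complete {D : Type*} [PartialOrder D]
    (θ : ℝ) (k : ℕ) (ψ : ℕ → D → D) (M : ℕ → D → ℝ)
    (hmono : ∀ i ≤ k, ∀ x y : D, x ≤ y → ψ i x ≤ ψ i y)
    (hcontr : ∀ i ≤ k, ∀ x : D, ψ i x ≤ x)
    (hidem : ∀ i ≤ k, ∀ x : D, ψ i (ψ i x) = ψ i x)
    (hid : ∀ x : D, ψ k x = x)
    (hchain : ∀ i < k, {d : D | ψ i d = d} ⊆ {d : D | ψ (i + 1) d = d})
    (hM : ∀ i < k, ∀ q : D, ψ (i + 1) q = q → M (i + 1) q ≤ M i (ψ i q))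
    (P : ℕ → Set D)
    (hP0 : P 0 = {p : D | ψ 0 p = p ∧ θ ≤ M 0 p})
    (hPsucc : ∀ i < k,
      P (i + 1) = {q : D | ψ (i + 1) q = q ∧ ψ i q ∈ P i ∧ θ ≤ M (i + 1) q}) :
    P k = {p : D | θ ≤ M k p} := by
  have key : ∀ i ≤ k, P i = {p : D | ψ i p = p ∧ θ ≤ M i p} := by
    intro i hi
    induction i with
    | zero => exact hP0
    | succ n ih =>
      have hn : n < k := Nat.lt_of_succ_le hi
      rw [hPsucc n hn, ih (le_of_lt hn)]
      ext q
      simp only [Set.mem_setOf_eq]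
      constructor
      · rintro ⟨hfix, _, hθ⟩; exact ⟨hfix, hθ⟩
      · rintro ⟨hfix, hθ⟩
        exact ⟨hfix, ⟨hidem n (le_of_lt hn) q,
          le_trans hθ (hM n hn q hfix)⟩, hθ⟩
  rw [key k le_rfl]
  ext p
  simp [hid p]
end

section
/- Let W = {w₁ < w₂ < ⋯ < w_n} be a finite set of reals, and for 1 ≤ j ≤ n let W^{(j)} denote the j smallest elements of W and W^{(−j)} the j largest elements of W. For 1 ≤ j < n, let ψ_j be the interval projection on intervals with endpoints in W (ordered by reverse containment) given by ψ_j([a,b]) = [max{l ∈ W^{(j)} : l ≤ a}, min{r ∈ W^{(−j)} : r ≥ b}]. Then for every interval p fixed by ψ_j, the set of intervals q fixed by ψ_{j+1} with ψ_j(q) = p has at most 4 elements. -/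
/-- The set of intervals `[a,b]` with endpoints `a, b` in the value set `W` and
`a ≤ b`, encoded as pairs of reals. -/
def intvOver (W : Set ℝ) : Set (ℝ × ℝ) :=
  {p : ℝ × ℝ | p.1 ∈ W ∧ p.2 ∈ W ∧ p.1 ≤ p.2}

/-- The interval projection determined by endpoint-constraint sets `L` and `R`:
`ψ_{[L,R]}([a,b]) = [max {l ∈ L | l ≤ a}, min {r ∈ R | r ≥ b}]`. -/
noncomputable def psiIntv (L R : Set ℝ) (p : ℝ × ℝ) : ℝ × ℝ :=
  (sSup {l ∈ L | l ≤ p.1}, sInf {r ∈ R | p.2 ≤ r})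

/-- `W^{(m)}`: the set of the `m` smallest elements of `W`. -/
def smallestVals (W : Set ℝ) (m : ℕ) : Set ℝ :=
  {w ∈ W | {v ∈ W | v ≤ w}.ncard ≤ m}

/-- `W^{(-m)}`: the set of the `m` largest elements of `W`. -/
def largestVals (W : Set ℝ) (m : ℕ) : Set ℝ :=
  {w ∈ W | {v ∈ W | w ≤ v}.ncard ≤ m}

private lemma sSup_eq_of_mem {T : Set ℝ} (hfin : T.Finite) {x : ℝ} (hx : x ∈ T)
    (hub : ∀ y ∈ T, y ≤ x) : sSup T = x :=
  le_antisymm (csSup_le ⟨x, hx⟩ hub) (le_csSup hfin.bddAbove hx)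

private lemma sInf_eq_of_mem {T : Set ℝ} (hfin : T.Finite) {x : ℝ} (hx : x ∈ T)
    (hlb : ∀ y ∈ T, x ≤ y) : sInf T = x :=
  le_antisymm (csInf_le hfin.bddBelow hx) (le_csInf ⟨x, hx⟩ hlb)

private lemma small_diff_subsingleton (W : Set ℝ) (hWfin : W.Finite) (j : ℕ) :
    (smallestVals W (j + 1) \ smallestVals W j).Subsingleton := by
  intro w hw w' hw'
  have hcard : ∀ u ∈ smallestVals W (j + 1) \ smallestVals W j,
      {v ∈ W | v ≤ u}.ncard = j + 1 := by
    rintro u ⟨⟨huW, h1⟩, h2⟩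
    have h3 : ¬ {v ∈ W | v ≤ u}.ncard ≤ j := fun h => h2 ⟨huW, h⟩
    omega
  have key : ∀ a b : ℝ, a ∈ smallestVals W (j + 1) \ smallestVals W j →
      b ∈ smallestVals W (j + 1) \ smallestVals W j → ¬ a < b := by
    intro a b ha hb hab
    have hss : {v ∈ W | v ≤ a} ⊂ {v ∈ W | v ≤ b} := by
      constructor
      · intro v ⟨hv1, hv2⟩; exact ⟨hv1, hv2.trans hab.le⟩
      · intro h
        have : b ∈ {v ∈ W | v ≤ a} := h ⟨hb.1.1, le_refl b⟩
        exact absurd this.2 (not_le.mpr hab)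
    have := Set.ncard_lt_ncard hss (hWfin.subset (fun v hv => hv.1))
    rw [hcard a ha, hcard b hb] at this
    omega
  rcases lt_trichotomy w w' with h | h | h
  · exact absurd h (key w w' hw hw')
  · exact h
  · exact absurd h (key w' w hw' hw)

private lemma large_diff_subsingleton (W : Set ℝ) (hWfin : W.Finite) (j : ℕ) :
    (largestVals W (j + 1) \ largestVals W j).Subsingleton := by
  intro w hw w' hw'
  have hcard : ∀ u ∈ largestVals W (j + 1) \ largestVals W j,
      {v ∈ W | u ≤ v}.ncard = j + 1 := by
    rintro u ⟨⟨huW, h1⟩, h2⟩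
    have h3 : ¬ {v ∈ W | u ≤ v}.ncard ≤ j := fun h => h2 ⟨huW, h⟩
    omega
  have key : ∀ a b : ℝ, a ∈ largestVals W (j + 1) \ largestVals W j →
      b ∈ largestVals W (j + 1) \ largestVals W j → ¬ a < b := by
    intro a b ha hb hab
    have hss : {v ∈ W | b ≤ v} ⊂ {v ∈ W | a ≤ v} := by
      constructor
      · intro v ⟨hv1, hv2⟩; exact ⟨hv1, hab.le.trans hv2⟩
      · intro h
        have : a ∈ {v ∈ W | b ≤ v} := h ⟨ha.1.1, le_refl a⟩
        exact absurd this.2 (not_le.mpr hab)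
    have := Set.ncard_lt_ncard hss (hWfin.subset (fun v hv => hv.1))
    rw [hcard a ha, hcard b hb] at this
    omega
  rcases lt_trichotomy w w' with h | h | h
  · exact absurd h (key w w' hw hw')
  · exact h
  · exact absurd h (key w' w hw' hw)

/-- Let `W = {w₁ < ⋯ < w_n}` be a finite set of reals and, for `1 ≤ j < n`, let
`ψ_j = ψ_{[W^{(j)}, W^{(-j)}]}` be the interval projection whose left endpoints
are constrained to the `j` smallest values of `W` and right endpoints to the
`j` largest. Then every interval `p` over `W` fixed by `ψ_j` has at most `4`
preimages under `ψ_j` among the intervals fixed by `ψ_{j+1}`. -/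
theorem psiIntv_chain_preimages_le_four (W : Set ℝ) (hWfin : W.Finite)
    (hWne : W.Nonempty) (n : ℕ) (hn : W.ncard = n)
    (j : ℕ) (hj1 : 1 ≤ j) (hjn : j < n) :
    ∀ p ∈ intvOver W, psiIntv (smallestVals W j) (largestVals W j) p = p →
      {q ∈ intvOver W |
          psiIntv (smallestVals W (j + 1)) (largestVals W (j + 1)) q = q ∧
          psiIntv (smallestVals W j) (largestVals W j) q = p}.ncard ≤ 4 := by
  intro p hp hfix
  -- min and max of W
  obtain ⟨m, hmW, hm⟩ := Set.exists_min_image W id hWfin hWne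
  obtain ⟨M, hMW, hM⟩ := Set.exists_max_image W id hWfin hWne
  have hmSmall : ∀ k : ℕ, m ∈ smallestVals W (k + 1) := by
    intro k
    refine ⟨hmW, ?_⟩
    have hsub : {v ∈ W | v ≤ m} ⊆ {m} := by
      intro v ⟨hv1, hv2⟩
      exact le_antisymm hv2 (hm v hv1)
    calc {v ∈ W | v ≤ m}.ncard ≤ ({m} : Set ℝ).ncard :=
          Set.ncard_le_ncard hsub (Set.finite_singleton m)
      _ = 1 := Set.ncard_singleton m
      _ ≤ k + 1 := by omega
  have hMLarge : ∀ k : ℕ, M ∈ largestVals W (k + 1) := by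
    intro k
    refine ⟨hMW, ?_⟩
    have hsub : {v ∈ W | M ≤ v} ⊆ {M} := by
      intro v ⟨hv1, hv2⟩
      exact le_antisymm (hM v hv1) hv2
    calc {v ∈ W | M ≤ v}.ncard ≤ ({M} : Set ℝ).ncard :=
          Set.ncard_le_ncard hsub (Set.finite_singleton M)
      _ = 1 := Set.ncard_singleton M
      _ ≤ k + 1 := by omega
  -- choose distinguished elements of the difference sets (if any)
  set D := smallestVals W (j + 1) \ smallestVals W j with hD
  set E := largestVals W (j + 1) \ largestVals W j with hE
  have haux : ∃ a : ℝ, ∀ d ∈ D, d = a := by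
    by_cases h : D.Nonempty
    · obtain ⟨a, ha⟩ := h
      exact ⟨a, fun d hd => small_diff_subsingleton W hWfin j hd ha⟩
    · exact ⟨0, fun d hd => absurd ⟨d, hd⟩ h⟩
  have hbux : ∃ b : ℝ, ∀ e ∈ E, e = b := by
    by_cases h : E.Nonempty
    · obtain ⟨b, hb⟩ := h
      exact ⟨b, fun e he => large_diff_subsingleton W hWfin j he hb⟩
    · exact ⟨0, fun e he => absurd ⟨e, he⟩ h⟩
  obtain ⟨a, ha⟩ := haux
  obtain ⟨b, hb⟩ := hbux
  set T : Set (ℝ × ℝ) := {(p.1, p.2), (p.1, b), (a, p.2), (a, b)} with hT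
  have hsub : {q ∈ intvOver W |
      psiIntv (smallestVals W (j + 1)) (largestVals W (j + 1)) q = q ∧
      psiIntv (smallestVals W j) (largestVals W j) q = p} ⊆ T := by
    rintro q ⟨⟨hq1W, hq2W, hq12⟩, hqfix, hqproj⟩
    -- unpack fixedness of q under ψ_{j+1}
    have hqfix1 : sSup {l ∈ smallestVals W (j + 1) | l ≤ q.1} = q.1 :=
      congrArg Prod.fst hqfix
    have hqfix2 : sInf {r ∈ largestVals W (j + 1) | q.2 ≤ r} = q.2 :=
      congrArg Prod.snd hqfix
    have hqproj1 : sSup {l ∈ smallestVals W j | l ≤ q.1} = p.1 :=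
      congrArg Prod.fst hqproj
    have hqproj2 : sInf {r ∈ largestVals W j | q.2 ≤ r} = p.2 :=
      congrArg Prod.snd hqproj
    -- q.1 ∈ smallestVals W (j+1)
    have hfin1 : ({l ∈ smallestVals W (j + 1) | l ≤ q.1}).Finite :=
      hWfin.subset (fun l hl => hl.1.1)
    have hne1 : ({l ∈ smallestVals W (j + 1) | l ≤ q.1}).Nonempty :=
      ⟨m, hmSmall j, hm q.1 hq1W⟩
    have hq1mem : q.1 ∈ smallestVals W (j + 1) := by
      have := hne1.csSup_mem hfin1
      rw [hqfix1] at this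
      exact this.1
    have hfin2 : ({r ∈ largestVals W (j + 1) | q.2 ≤ r}).Finite :=
      hWfin.subset (fun r hr => hr.1.1)
    have hne2 : ({r ∈ largestVals W (j + 1) | q.2 ≤ r}).Nonempty :=
      ⟨M, hMLarge j, hM q.2 hq2W⟩
    have hq2mem : q.2 ∈ largestVals W (j + 1) := by
      have := hne2.csInf_mem hfin2
      rw [hqfix2] at this
      exact this.1
    -- first coordinate: q.1 = p.1 or q.1 = a
    have h1 : q.1 = p.1 ∨ q.1 = a := by
      by_cases hcase : q.1 ∈ smallestVals W j
      · left
        rw [← hqproj1]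
        exact (sSup_eq_of_mem (T := {l ∈ smallestVals W j | l ≤ q.1}) (hWfin.subset (fun l hl => hl.1.1))
          ⟨hcase, le_refl q.1⟩ (fun y hy => hy.2)).symm
      · right
        exact ha q.1 ⟨hq1mem, hcase⟩
    have h2 : q.2 = p.2 ∨ q.2 = b := by
      by_cases hcase : q.2 ∈ largestVals W j
      · left
        rw [← hqproj2]
        exact (sInf_eq_of_mem (T := {r ∈ largestVals W j | q.2 ≤ r}) (hWfin.subset (fun r hr => hr.1.1))
          ⟨hcase, le_refl q.2⟩ (fun y hy => hy.2)).symm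
      · right
        exact hb q.2 ⟨hq2mem, hcase⟩
    have hq : q = (q.1, q.2) := rfl
    rcases h1 with h1 | h1 <;> rcases h2 with h2 | h2 <;>
      simp only [hT, Set.mem_insert_iff, Set.mem_singleton_iff] <;>
      rw [hq, h1, h2] <;> tauto
  have hTfin : T.Finite := (Set.finite_singleton _).insert _ |>.insert _ |>.insert _
  have hT4 : T.ncard ≤ 4 := by
    calc T.ncard ≤ ({(p.1, b), (a, p.2), (a, b)} : Set (ℝ × ℝ)).ncard + 1 :=
          Set.ncard_insert_le _ _
      _ ≤ (({(a, p.2), (a, b)} : Set (ℝ × ℝ)).ncard + 1) + 1 := by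
          have := Set.ncard_insert_le ((p.1, b)) ({(a, p.2), (a, b)} : Set (ℝ × ℝ))
          omega
      _ ≤ ((({(a, b)} : Set (ℝ × ℝ)).ncard + 1) + 1) + 1 := by
          have := Set.ncard_insert_le ((a, p.2)) ({(a, b)} : Set (ℝ × ℝ))
          omega
      _ ≤ 4 := by
          rw [Set.ncard_singleton]
  exact le_trans (Set.ncard_le_ncard hsub hTfin) hT4
end
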